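/- Let x₁,…,x_N ∈ ℝ^p be pairwise orthogonal vectors with ‖x_i‖₂² = p for all i, let n ≥ 1 with n + 1 ≤ N, and define c = (n+1)^{−1/2}·Σ_{i=1}^{n+1} x_i. Let w* be the probability vector with w*_i = 1/(n+1) for 1 ≤ i ≤ n+1 and w*_i = 0 otherwise. Then: (a) c lies in the range of Σ_{w*} and cᵀ(Σ_{w*})⁺c = n + 1; and (b) for every probability vector w ∈ ℝ^N such that c lies in the range of Σ_w, one has cᵀ(Σ_w)⁺c ≥ n + 1. Hence w* is a c-optimal design. -/

import Mathlib

open Matrix Finset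

open scoped Classical in
/-- The Moore–Penrose pseudo-inverse of a real matrix, defined (via choice) as the
unique matrix satisfying the four Penrose conditions. -/
noncomputable def penroseInv {m n : ℕ} (A : Matrix (Fin m) (Fin n) ℝ) :
    Matrix (Fin n) (Fin m) ℝ :=
  if h : ∃ B : Matrix (Fin n) (Fin m) ℝ,
      A * B * A = A ∧ B * A * B = B ∧ (A * B)ᵀ = A * B ∧ (B * A)ᵀ = B * A
  then h.choose else 0

/-- The design covariance matrix `Σ_w = Σᵢ wᵢ xᵢ xᵢᵀ`. -/
noncomputable def covMatrix {N p : ℕ} (w : Fin N → ℝ) (x : Fin N → Fin p → ℝ) :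
    Matrix (Fin p) (Fin p) ℝ :=
  ∑ i, w i • Matrix.vecMulVec (x i) (x i)

lemma exists_penrose {p : ℕ} (A : Matrix (Fin p) (Fin p) ℝ) (hA : A.IsHermitian) :
    ∃ B : Matrix (Fin p) (Fin p) ℝ,
      A * B * A = A ∧ B * A * B = B ∧ (A * B)ᵀ = A * B ∧ (B * A)ᵀ = B * A := by
  set U : Matrix (Fin p) (Fin p) ℝ := (hA.eigenvectorUnitary : Matrix (Fin p) (Fin p) ℝ) with hUdef
  have hU : star U * U = 1 := by
    rw [hUdef]; exact (Matrix.mem_unitaryGroup_iff').mp hA.eigenvectorUnitary.2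
  set d : Fin p → ℝ := RCLike.ofReal ∘ hA.eigenvalues with hd
  have hspec : A = U * Matrix.diagonal d * star U := hA.spectral_theorem
  have key : ∀ e f : Fin p → ℝ,
      (U * Matrix.diagonal e * star U) * (U * Matrix.diagonal f * star U)
        = U * Matrix.diagonal (fun i => e i * f i) * star U := by
    intro e f
    have h1 : star U * (U * (Matrix.diagonal f * star U)) = Matrix.diagonal f * star U := by
      rw [← mul_assoc, hU, one_mul]
    simp only [mul_assoc, h1]
    rw [← mul_assoc (Matrix.diagonal e) (Matrix.diagonal f), Matrix.diagonal_mul_diagonal]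
  have hdiag : ∀ e f : Fin p → ℝ, (∀ i, e i = f i) →
      U * Matrix.diagonal e * star U = U * Matrix.diagonal f * star U := by
    intro e f h
    rw [funext h]
  have hsymm : ∀ e : Fin p → ℝ,
      (U * Matrix.diagonal e * star U)ᵀ = U * Matrix.diagonal e * star U := by
    intro e
    have hsU : star U = Uᵀ := by
      rw [Matrix.star_eq_conjTranspose]
      ext i j
      simp [Matrix.conjTranspose_apply]
    rw [hsU]
    simp [Matrix.transpose_mul, Matrix.diagonal_transpose, mul_assoc]
  refine ⟨U * Matrix.diagonal (fun i => (d i)⁻¹) * star U, ?_, ?_, ?_, ?_⟩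
  · rw [hspec, key, key]
    refine hdiag _ _ fun i => ?_
    rcases eq_or_ne (d i) 0 with h | h
    · simp [h]
    · field_simp
  · rw [hspec, key, key]
    refine hdiag _ _ fun i => ?_
    rcases eq_or_ne (d i) 0 with h | h
    · simp [h]
    · field_simp
  · rw [hspec, key]; exact hsymm _
  · rw [hspec, key]; exact hsymm _

lemma penroseInv_spec {q : ℕ} (A : Matrix (Fin q) (Fin q) ℝ) (hA : A.IsHermitian) :
    A * penroseInv A * A = A ∧ penroseInv A * A * penroseInv A = penroseInv A ∧
    (A * penroseInv A)ᵀ = A * penroseInv A ∧ (penroseInv A * A)ᵀ = penroseInv A * A := by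
  have h := exists_penrose A hA
  have he : penroseInv A = h.choose := by rw [penroseInv, dif_pos h]
  rw [he]
  exact h.choose_spec

lemma covMatrix_transpose {N p : ℕ} (w : Fin N → ℝ) (x : Fin N → Fin p → ℝ) :
    (covMatrix w x)ᵀ = covMatrix w x := by
  ext i j
  simp only [covMatrix, Matrix.transpose_apply, Matrix.sum_apply, Matrix.smul_apply,
    Matrix.vecMulVec_apply, smul_eq_mul]
  exact Finset.sum_congr rfl fun k _ => by ring

lemma covMatrix_isHermitian {N p : ℕ} (w : Fin N → ℝ) (x : Fin N → Fin p → ℝ) :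
    (covMatrix w x).IsHermitian := by
  have h : (covMatrix w x)ᴴ = (covMatrix w x)ᵀ := by
    ext i j
    simp [Matrix.conjTranspose_apply]
  exact h.trans (covMatrix_transpose w x)

lemma covMatrix_mulVec {N p : ℕ} (w : Fin N → ℝ) (x : Fin N → Fin p → ℝ) (v : Fin p → ℝ) :
    (covMatrix w x) *ᵥ v = ∑ i, (w i * (x i ⬝ᵥ v)) • x i := by
  funext j
  simp only [covMatrix, Matrix.mulVec, dotProduct, Matrix.sum_apply, Finset.sum_apply,
    Pi.smul_apply, Matrix.smul_apply, Matrix.vecMulVec_apply, smul_eq_mul, Finset.sum_mul,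
    Finset.mul_sum]
  rw [Finset.sum_comm]
  exact Finset.sum_congr rfl fun i _ => Finset.sum_congr rfl fun k _ => by ring

lemma dot_sum {p : ℕ} {ι : Type*} (t : Finset ι) (f : ι → Fin p → ℝ) (v : Fin p → ℝ) :
    v ⬝ᵥ (∑ i ∈ t, f i) = ∑ i ∈ t, v ⬝ᵥ f i := by
  simp only [dotProduct, Finset.sum_apply, Finset.mul_sum]
  exact Finset.sum_comm

lemma dot_sum_smul {p : ℕ} {ι : Type*} (t : Finset ι) (a : ι → ℝ) (f : ι → Fin p → ℝ)
    (v : Fin p → ℝ) : v ⬝ᵥ (∑ i ∈ t, a i • f i) = ∑ i ∈ t, a i * (v ⬝ᵥ f i) := by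
  simp only [dotProduct, Finset.sum_apply, Pi.smul_apply, smul_eq_mul, Finset.mul_sum]
  rw [Finset.sum_comm]
  exact Finset.sum_congr rfl fun i _ => Finset.sum_congr rfl fun k _ => by ring

lemma sum_smul_dot {p : ℕ} {ι : Type*} (t : Finset ι) (a : ι → ℝ) (f : ι → Fin p → ℝ)
    (v : Fin p → ℝ) : (∑ i ∈ t, a i • f i) ⬝ᵥ v = ∑ i ∈ t, a i * (f i ⬝ᵥ v) := by
  rw [dotProduct_comm, dot_sum_smul]
  exact Finset.sum_congr rfl fun i _ => by rw [dotProduct_comm]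

lemma value_eq {p : ℕ} (A B : Matrix (Fin p) (Fin p) ℝ) (hA : Aᵀ = A)
    (hB : A * B * A = A) (z c : Fin p → ℝ) (hz : A *ᵥ z = c) :
    c ⬝ᵥ B *ᵥ c = z ⬝ᵥ c := by
  calc c ⬝ᵥ B *ᵥ c = (z ᵥ* Aᵀ) ⬝ᵥ B *ᵥ c := by rw [Matrix.vecMul_transpose, hz]
    _ = z ⬝ᵥ Aᵀ *ᵥ (B *ᵥ c) := (Matrix.dotProduct_mulVec z Aᵀ _).symm
    _ = z ⬝ᵥ (Aᵀ * B * A) *ᵥ z := by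
        rw [← hz, Matrix.mulVec_mulVec, Matrix.mulVec_mulVec]
    _ = z ⬝ᵥ A *ᵥ z := by rw [hA, hB]
    _ = z ⬝ᵥ c := by rw [hz]

/-- Characterization of the c-optimal design in Example 1: for pairwise orthogonal
design points with `‖xᵢ‖₂² = p` and `c = (n+1)^{-1/2} Σ_{i<n+1} xᵢ`, the uniform
design on the first `n+1` points is c-optimal with value `cᵀ Σ_{w*}⁺ c = n+1`. -/
theorem example_one_c_optimal_design
    (N p n : ℕ) (hp : 1 ≤ p) (hn : 1 ≤ n) (hnN : n + 1 ≤ N)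
    (x : Fin N → Fin p → ℝ)
    (horth : ∀ i j, i ≠ j → x i ⬝ᵥ x j = 0)
    (hnorm : ∀ i, x i ⬝ᵥ x i = (p : ℝ))
    (c : Fin p → ℝ)
    (hc : c = (Real.sqrt (n + 1))⁻¹ •
      ∑ i ∈ Finset.univ.filter (fun i : Fin N => (i : ℕ) < n + 1), x i)
    (wstar : Fin N → ℝ)
    (hwstar : ∀ i : Fin N,
      wstar i = if (i : ℕ) < n + 1 then 1 / ((n : ℝ) + 1) else 0) :
    ((∃ z, (covMatrix wstar x).mulVec z = c) ∧
      c ⬝ᵥ (penroseInv (covMatrix wstar x)).mulVec c = (n : ℝ) + 1) ∧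
    (∀ w : Fin N → ℝ, (∀ i, 0 ≤ w i) → ∑ i, w i = 1 →
      (∃ z, (covMatrix w x).mulVec z = c) →
      (n : ℝ) + 1 ≤ c ⬝ᵥ (penroseInv (covMatrix w x)).mulVec c) := by
  have hnn1 : (0:ℝ) < (n:ℝ) + 1 := by positivity
  have hp0 : (0:ℝ) < (p:ℝ) := by exact_mod_cast Nat.lt_of_lt_of_le Nat.zero_lt_one hp
  set s : Finset (Fin N) := Finset.univ.filter (fun i : Fin N => (i : ℕ) < n + 1) with hs
  have hmem : ∀ i : Fin N, i ∈ s ↔ (i : ℕ) < n + 1 := by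
    intro i; simp [hs]
  have hcard : s.card = n + 1 := by
    have hmap : s = Finset.map (Fin.castLEEmb hnN) Finset.univ := by
      ext j
      rw [hmem]
      simp only [Finset.mem_map, Finset.mem_univ, true_and]
      constructor
      · intro h
        exact ⟨⟨(j : ℕ), h⟩, by ext; simp [Fin.castLEEmb]⟩
      · rintro ⟨a, rfl⟩
        simpa using a.isLt
    rw [hmap, Finset.card_map, Finset.card_univ, Fintype.card_fin]
  set r : ℝ := (Real.sqrt ((n:ℝ) + 1))⁻¹ with hr
  have hsq : Real.sqrt ((n:ℝ)+1) * Real.sqrt ((n:ℝ)+1) = (n:ℝ)+1 :=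
    Real.mul_self_sqrt hnn1.le
  have hsqrtpos : 0 < Real.sqrt ((n:ℝ)+1) := Real.sqrt_pos.mpr hnn1
  have hr0 : r ≠ 0 := inv_ne_zero hsqrtpos.ne'
  -- dot products with c
  have hxc : ∀ i : Fin N, x i ⬝ᵥ c = if (i : ℕ) < n + 1 then r * p else 0 := by
    intro i
    rw [hc, dotProduct_smul, smul_eq_mul, dot_sum]
    by_cases hi : (i : ℕ) < n + 1
    · rw [Finset.sum_eq_single i]
      · simp [hnorm i, hi]
      · intro b _ hb
        exact horth i b (Ne.symm hb)
      · intro h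
        exact absurd ((hmem i).mpr hi) h
    · rw [Finset.sum_eq_zero, if_neg hi, mul_zero]
      intro j hj
      refine horth i j fun h => hi ?_
      rw [h]
      exact (hmem j).mp hj
  have hcc : c ⬝ᵥ c = (p : ℝ) := by
    have h1 : c ⬝ᵥ c = r * ∑ j ∈ s, c ⬝ᵥ x j := by
      nth_rewrite 2 [hc]
      rw [dotProduct_smul, smul_eq_mul, dot_sum]
    rw [h1]
    have h2 : ∀ j ∈ s, c ⬝ᵥ x j = r * p := by
      intro j hj
      rw [dotProduct_comm, hxc j, if_pos ((hmem j).mp hj)]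
    rw [Finset.sum_congr rfl h2, Finset.sum_const, hcard, nsmul_eq_mul]
    push_cast
    rw [hr]
    rw [← hsq]
    field_simp
    rw [Real.sqrt_sq hsqrtpos.le]
  -- values of the criterion
  have hherm := fun w => covMatrix_isHermitian w x
  have hvalue : ∀ w : Fin N → ℝ, ∀ z, (covMatrix w x) *ᵥ z = c →
      c ⬝ᵥ (penroseInv (covMatrix w x)) *ᵥ c = z ⬝ᵥ c := by
    intro w z hz
    exact value_eq _ _ (covMatrix_transpose w x) (penroseInv_spec _ (hherm w)).1 z c hz
  -- Part (a)
  set z0 : Fin p → ℝ := (((n:ℝ) + 1) / p) • c with hz0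
  have hz0eq : (covMatrix wstar x) *ᵥ z0 = c := by
    rw [covMatrix_mulVec]
    have hterm : ∀ i : Fin N, (wstar i * (x i ⬝ᵥ z0)) • x i
        = if (i : ℕ) < n + 1 then r • x i else 0 := by
      intro i
      rw [hwstar i, hz0, dotProduct_smul, smul_eq_mul, hxc i]
      by_cases hi : (i : ℕ) < n + 1
      · simp only [if_pos hi]
        congr 1
        field_simp
      · simp [hi]
    rw [Finset.sum_congr rfl fun i _ => hterm i, ← Finset.sum_filter, ← hs,
      ← Finset.smul_sum, hc]
  have hvala : c ⬝ᵥ (penroseInv (covMatrix wstar x)) *ᵥ c = (n : ℝ) + 1 := by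
    rw [hvalue wstar z0 hz0eq, hz0, smul_dotProduct, smul_eq_mul, hcc]
    field_simp
  refine ⟨⟨⟨z0, hz0eq⟩, hvala⟩, ?_⟩
  -- Part (b)
  rintro w hw0 hw1 ⟨z, hz⟩
  rw [hvalue w z hz]
  set a : Fin N → ℝ := fun i => x i ⬝ᵥ z with ha
  have hcz : c = ∑ i, (w i * a i) • x i := by rw [← hz, covMatrix_mulVec]
  have hV : z ⬝ᵥ c = ∑ i, w i * a i ^ 2 := by
    rw [hcz, dot_sum_smul]
    refine Finset.sum_congr rfl fun i _ => ?_
    rw [dotProduct_comm z (x i), show x i ⬝ᵥ z = a i from rfl]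
    ring
  have hpsum : (p : ℝ) = (∑ i ∈ s, w i * a i) * (r * p) := by
    have h1 : c ⬝ᵥ c = ∑ i, (w i * a i) * (x i ⬝ᵥ c) := by
      nth_rewrite 1 [hcz]
      rw [sum_smul_dot]
    have h2 : ∀ i : Fin N, (w i * a i) * (x i ⬝ᵥ c)
        = if (i : ℕ) < n + 1 then (w i * a i) * (r * p) else 0 := by
      intro i
      rw [hxc i]
      by_cases hi : (i : ℕ) < n + 1 <;> simp [hi]
    calc (p : ℝ) = c ⬝ᵥ c := hcc.symm
      _ = ∑ i, (w i * a i) * (x i ⬝ᵥ c) := h1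
      _ = (∑ i ∈ s, w i * a i) * (r * p) := by
          rw [Finset.sum_congr rfl fun i _ => h2 i, ← Finset.sum_filter, ← hs,
            ← Finset.sum_mul]
  have hS : ∑ i ∈ s, w i * a i = Real.sqrt ((n:ℝ) + 1) := by
    have hrp : r * (p : ℝ) ≠ 0 := mul_ne_zero hr0 hp0.ne'
    have h3 : ∑ i ∈ s, w i * a i = (p : ℝ) / (r * p) := by
      rw [eq_div_iff hrp]
      exact hpsum.symm
    rw [h3, hr]
    field_simp
  -- Cauchy-Schwarz
  have hCS := Finset.sum_mul_sq_le_sq_mul_sq s (fun i => Real.sqrt (w i))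
    (fun i => Real.sqrt (w i) * a i)
  have e1 : ∀ i ∈ s, Real.sqrt (w i) * (Real.sqrt (w i) * a i) = w i * a i := by
    intro i _
    rw [← mul_assoc, Real.mul_self_sqrt (hw0 i)]
  have e2 : ∀ i ∈ s, Real.sqrt (w i) ^ 2 = w i := fun i _ => Real.sq_sqrt (hw0 i)
  have e3 : ∀ i ∈ s, (Real.sqrt (w i) * a i) ^ 2 = w i * a i ^ 2 := by
    intro i _
    rw [mul_pow, Real.sq_sqrt (hw0 i)]
  rw [Finset.sum_congr rfl e1, Finset.sum_congr rfl e2, Finset.sum_congr rfl e3, hS,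
    Real.sq_sqrt hnn1.le] at hCS
  have hsub : ∑ i ∈ s, w i ≤ 1 := by
    rw [← hw1]
    exact Finset.sum_le_sum_of_subset_of_nonneg (Finset.filter_subset _ _)
      (fun i _ _ => hw0 i)
  have hnn : 0 ≤ ∑ i ∈ s, w i * a i ^ 2 :=
    Finset.sum_nonneg fun i _ => mul_nonneg (hw0 i) (sq_nonneg _)
  have hsub2 : ∑ i ∈ s, w i * a i ^ 2 ≤ ∑ i, w i * a i ^ 2 :=
    Finset.sum_le_sum_of_subset_of_nonneg (Finset.filter_subset _ _)
      (fun i _ _ => mul_nonneg (hw0 i) (sq_nonneg _))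
  calc (n : ℝ) + 1 ≤ (∑ i ∈ s, w i) * ∑ i ∈ s, w i * a i ^ 2 := hCS
    _ ≤ ∑ i ∈ s, w i * a i ^ 2 := mul_le_of_le_one_left hnn hsub
    _ ≤ ∑ i, w i * a i ^ 2 := hsub2
    _ = z ⬝ᵥ c := hV.symm
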